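/- Let b and N be coprime positive integers with 2b ≤ N, and let b/N = [0; a₁, …, a_s] be the regular continued fraction expansion of b/N (with a_s ≥ 2 when s ≥ 1). Then the set vrm(|Γ(1,b,N)|) has exactly s + 3 elements. -/

import Mathlib

/-- The box `Π(A)` spanned by a (finite nonempty) set `A ⊆ ℝⁿ_{≥0}`:
all points with nonnegative coordinates bounded by the coordinatewise maxima of `A`. -/
def box {n : ℕ} (A : Set (Fin n → ℝ)) : Set (Fin n → ℝ) :=
  {x | ∀ i, 0 ≤ x i ∧ x i ≤ sSup ((fun p => p i) '' A)}

/-- The set of Voronoi relative minima of `S`: points `g ∈ S` such that the box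
`Π({g})` contains no point of `S \ {g}`. -/
def vrm {n : ℕ} (S : Set (Fin n → ℝ)) : Set (Fin n → ℝ) :=
  {g | g ∈ S ∧ ∀ p ∈ S, p ≠ g → p ∉ box {g}}

/-- A nonempty finite subset `F ⊆ vrm S` is minimal if the box `Π(F)` contains
no point of `vrm S \ F`. -/
def IsMinimal {n : ℕ} (S F : Set (Fin n → ℝ)) : Prop :=
  F.Nonempty ∧ F.Finite ∧ F ⊆ vrm S ∧ ∀ p ∈ vrm S, p ∉ F → p ∉ box F

/-- `p` is a point on the `j`-th coordinate axis, different from the origin. -/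
def OnAxis (j : Fin 3) (p : Fin 3 → ℝ) : Prop :=
  p ≠ 0 ∧ ∀ k, k ≠ j → p k = 0

/-- `S ⊆ ℝ³` is axial if it contains a point on each of the three coordinate axes. -/
def Axial (S : Set (Fin 3 → ℝ)) : Prop :=
  ∀ j : Fin 3, ∃ p ∈ S, ∀ k, k ≠ j → p k = 0

/-- A finite axial set `S ⊆ ℝ³_{≥0}` is in general position if (i) each coordinate
plane contains exactly two points of `S`, neither at the origin, lying on the two
coordinate axes contained in that plane, and (ii) every other plane parallel to a
coordinate plane contains at most one point of `S`. -/
def GeneralPosition (S : Set (Fin 3 → ℝ)) : Prop :=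
  (∀ i : Fin 3, ∃ p q : Fin 3 → ℝ, p ≠ q ∧ {r | r ∈ S ∧ r i = 0} = {p, q} ∧
    ∃ j k : Fin 3, j ≠ i ∧ k ≠ i ∧ j ≠ k ∧ OnAxis j p ∧ OnAxis k q) ∧
  (∀ i : Fin 3, ∀ c : ℝ, c ≠ 0 → {r | r ∈ S ∧ r i = c}.Subsingleton)

/-- The rank-1 lattice `Γ(a,b,N) = {m₁·(1,a,b) + m₂·(0,N,0) + m₃·(0,0,N)} ⊆ ℝ³`. -/
def Gamma (a b N : ℤ) : Set (Fin 3 → ℝ) :=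
  {p | ∃ m₁ m₂ m₃ : ℤ,
    p = ![(m₁ : ℝ), (m₁ : ℝ) * a + (m₂ : ℝ) * N, (m₁ : ℝ) * b + (m₃ : ℝ) * N]}

/-- `|Γ| = {(|x₁|,…,|xₙ|) : x ∈ Γ} \ {0}`. -/
def absSet {n : ℕ} (L : Set (Fin n → ℝ)) : Set (Fin n → ℝ) :=
  {q | (∃ p ∈ L, ∀ i, q i = |p i|) ∧ q ≠ 0}

/-- `|x|_N = min(x mod N, (−x) mod N)`, the distance from `x` to the nearest
multiple of `N`. -/
def distN (N x : ℤ) : ℤ := min (x % N) ((-x) % N)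

/-- The value of a (finite) regular continued fraction `[c₀; c₁, …, c_s]`
given as a list of its partial quotients. -/
def cfVal : List ℤ → ℚ
  | [] => 0
  | [c] => (c : ℚ)
  | c :: d :: rest => (c : ℚ) + 1 / cfVal (d :: rest)

/-- `IsRegularCF r l` : the list `l = [c₀, c₁, …, c_s]` is the regular continued
fraction expansion of the rational `r`. -/
def IsRegularCF (r : ℚ) (l : List ℤ) : Prop :=
  l ≠ [] ∧ (∀ c ∈ l.head?, 0 ≤ c) ∧ (∀ c ∈ l.tail, 1 ≤ c) ∧
    (2 ≤ l.length → ∀ c ∈ l.getLast?, 2 ≤ c) ∧ cfVal l = r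

/-!
Write `L = {(m, c) ∈ ℤ² : N ∣ c - m b}`; then `|Γ(1,b,N)|` consists of the nonzero points
`(|m|, |m'|, |c|)` with `m' ≡ m (mod N)` and `(m, c) ∈ L`. Apart from the three axis points
`(N,0,0), (0,N,0), (0,0,N)`, a Voronoi relative minimum has `N ∤ m`, and then its first two
coordinates can both be lowered to `|m|_N`; so the other minima are the points `(q, q, r)` with
`(q, r)` a relative minimum of `{(|m|, |c|) : (m, c) ∈ L, 0 < |m| < N}`.

The Euclidean algorithm on `(N, b)`, which computes the continued fraction of `b/N`, runs through
consecutive bases `(q₋, ∓r₋), (q, ±r)` of `L`, where `q₋ < q` are continuant denominators and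
`r₋ > r` remainders. Decomposing in such a basis shows that every `(m, c) ∈ L` with
`0 < |m| < q` has `|c| ≥ r₋`. This makes the `s` pairs `(q, r)` met before the algorithm stops
exactly the relative minima, and they are distinct because `2b ≤ N` forces `a₁ ≥ 2`, so that the
`q` increase strictly.
-/

def intPt (x y z : ℤ) : Fin 3 → ℝ := ![(x : ℝ), (y : ℝ), (z : ℝ)]

@[simp] lemma intPt_apply_zero (x y z : ℤ) : intPt x y z 0 = x := rfl
@[simp] lemma intPt_apply_one (x y z : ℤ) : intPt x y z 1 = y := rfl
@[simp] lemma intPt_apply_two (x y z : ℤ) : intPt x y z 2 = z := rfl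

lemma intPt_inj {x y z x' y' z' : ℤ} :
    intPt x y z = intPt x' y' z' ↔ x = x' ∧ y = y' ∧ z = z' := by
  simp [funext_iff, Fin.forall_fin_succ]

lemma intPt_eq_zero {x y z : ℤ} : intPt x y z = 0 ↔ x = 0 ∧ y = 0 ∧ z = 0 := by
  simp [funext_iff, Fin.forall_fin_succ]

lemma mem_box_singleton {n : ℕ} {p g : Fin n → ℝ} : p ∈ box {g} ↔ ∀ i, 0 ≤ p i ∧ p i ≤ g i := by
  simp [box]

lemma intPt_mem_box_singleton {x y z X Y Z : ℤ} (hx : 0 ≤ x) (hy : 0 ≤ y) (hz : 0 ≤ z) :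
    intPt x y z ∈ box {intPt X Y Z} ↔ x ≤ X ∧ y ≤ Y ∧ z ≤ Z := by
  simp [mem_box_singleton, Fin.forall_fin_succ, hx, hy, hz]

lemma eq_of_mem_vrm_of_mem_box {n : ℕ} {S : Set (Fin n → ℝ)} {g p : Fin n → ℝ}
    (hg : g ∈ vrm S) (hp : p ∈ S) (hpg : p ∈ box {g}) : p = g :=
  by_contra fun hne => hg.2 p hp hne hpg

lemma vrm_eq_of_forall_exists_mem_box {n : ℕ} {S T : Set (Fin n → ℝ)} (hT : T ⊆ vrm S)
    (hdom : ∀ p ∈ S, ∃ t ∈ T, t ∈ box {p}) : vrm S = T := by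
  refine Set.Subset.antisymm (fun p hp => ?_) hT
  obtain ⟨t, ht, htp⟩ := hdom p hp.1
  rwa [← eq_of_mem_vrm_of_mem_box hp (hT ht).1 htp]

section Lattice

variable {b N : ℤ}

lemma mem_absSet_Gamma_one {p : Fin 3 → ℝ} :
    p ∈ absSet (Gamma 1 b N) ↔
      (∃ m m' c : ℤ, N ∣ m' - m ∧ N ∣ c - m * b ∧ p = intPt |m| |m'| |c|) ∧ p ≠ 0 := by
  refine and_congr_left fun _ => ⟨?_, ?_⟩
  · rintro ⟨_, ⟨m, k, j, rfl⟩, hp⟩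
    refine ⟨m, m + k * N, m * b + j * N, ⟨k, by ring⟩, ⟨j, by ring⟩, ?_⟩
    ext i
    fin_cases i <;> simp [hp]
  · rintro ⟨m, m', c, ⟨k, hk⟩, ⟨j, hj⟩, rfl⟩
    obtain rfl : m' = m + k * N := by linarith
    obtain rfl : c = m * b + j * N := by linarith
    refine ⟨_, ⟨m, k, j, rfl⟩, fun i => ?_⟩
    fin_cases i <;> simp

lemma intPt_mem_vrm_absSet_Gamma_one {X Y Z : ℤ} (hmem : intPt X Y Z ∈ absSet (Gamma 1 b N))
    (hmin : ∀ m m' c : ℤ, N ∣ m' - m → N ∣ c - m * b → ¬(m = 0 ∧ m' = 0 ∧ c = 0) →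
      |m| ≤ X → |m'| ≤ Y → |c| ≤ Z → X ≤ |m| ∧ Y ≤ |m'| ∧ Z ≤ |c|) :
    intPt X Y Z ∈ vrm (absSet (Gamma 1 b N)) := by
  refine ⟨hmem, fun p hp hne hbox => hne ?_⟩
  obtain ⟨⟨m, m', c, hm', hc, rfl⟩, hp0⟩ := mem_absSet_Gamma_one.1 hp
  rw [intPt_mem_box_singleton (abs_nonneg _) (abs_nonneg _) (abs_nonneg _)] at hbox
  have hne0 : ¬(m = 0 ∧ m' = 0 ∧ c = 0) := by
    rintro ⟨rfl, rfl, rfl⟩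
    simp [intPt_eq_zero] at hp0
  have := hmin m m' c hm' hc hne0 hbox.1 hbox.2.1 hbox.2.2
  rw [intPt_inj]
  omega

lemma le_abs_of_dvd {x : ℤ} (h : N ∣ x) (hx : x ≠ 0) : N ≤ |x| :=
  Int.le_of_dvd (abs_pos.2 hx) ((dvd_abs _ _).2 h)

lemma intPt_N_0_0_mem_vrm (hN : 0 < N) : intPt N 0 0 ∈ vrm (absSet (Gamma 1 b N)) := by
  refine intPt_mem_vrm_absSet_Gamma_one (mem_absSet_Gamma_one.2
    ⟨⟨N, 0, 0, by simp, by simp, by simp [abs_of_pos hN]⟩, by simp [intPt_eq_zero, hN.ne']⟩) ?_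
  intro m m' c hm' _ hne _ hm'0 hc0
  obtain rfl : m' = 0 := abs_nonpos_iff.1 hm'0
  obtain rfl : c = 0 := abs_nonpos_iff.1 hc0
  have hm : m ≠ 0 := fun hm => hne ⟨hm, rfl, rfl⟩
  exact ⟨le_abs_of_dvd (by simpa using hm') hm, by simp, by simp⟩

lemma intPt_0_N_0_mem_vrm (hN : 0 < N) : intPt 0 N 0 ∈ vrm (absSet (Gamma 1 b N)) := by
  refine intPt_mem_vrm_absSet_Gamma_one (mem_absSet_Gamma_one.2
    ⟨⟨0, N, 0, by simp, by simp, by simp [abs_of_pos hN]⟩, by simp [intPt_eq_zero, hN.ne']⟩) ?_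
  intro m m' c hm' hc hne hm0 _ hc0
  obtain rfl : m = 0 := abs_nonpos_iff.1 hm0
  obtain rfl : c = 0 := abs_nonpos_iff.1 hc0
  have hm'0 : m' ≠ 0 := fun hm'0 => hne ⟨rfl, hm'0, rfl⟩
  exact ⟨by simp, le_abs_of_dvd (by simpa using hm') hm'0, by simp⟩

lemma intPt_0_0_N_mem_vrm (hN : 0 < N) : intPt 0 0 N ∈ vrm (absSet (Gamma 1 b N)) := by
  refine intPt_mem_vrm_absSet_Gamma_one (mem_absSet_Gamma_one.2
    ⟨⟨0, 0, N, by simp, by simp, by simp [abs_of_pos hN]⟩, by simp [intPt_eq_zero, hN.ne']⟩) ?_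
  intro m m' c _ hc hne hm0 hm'0 _
  obtain rfl : m = 0 := abs_nonpos_iff.1 hm0
  obtain rfl : m' = 0 := abs_nonpos_iff.1 hm'0
  have hc0 : c ≠ 0 := fun hc0 => hne ⟨rfl, rfl, hc0⟩
  exact ⟨by simp, by simp, le_abs_of_dvd (by simpa using hc) hc0⟩

end Lattice

section BestApproximation

lemma abs_le_abs_add_of_abs_add_lt {P P' e e' u v : ℤ} (hP : 0 ≤ P) (hP' : 0 ≤ P')
    (hsign : e * e' ≤ 0) (hm : u * P + v * P' ≠ 0) (hlt : |u * P + v * P'| < P') :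
    |e| ≤ |u * e + v * e'| := by
  have abs_add : ∀ s t : ℤ, 0 ≤ s * t → |s + t| = |s| + |t| :=
    fun s t h => (abs_add_eq_add_abs_iff s t).2 (Int.mul_nonneg_iff.1 h)
  -- otherwise `u P` and `v P'` have the same sign, so `|u P + v P'| ≥ |v| P' ≥ P'`
  have hu : u ≠ 0 ∧ u * v ≤ 0 := by
    by_contra! h
    have huv : 0 ≤ u * v := by by_cases hu : u = 0 <;> simp_all [le_of_lt]
    have hv : v ≠ 0 := by rintro rfl; simp_all
    have : |v| * P' ≤ |u * P + v * P'| := by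
      rw [abs_add _ _ (by nlinarith [mul_nonneg hP hP']), abs_mul, abs_mul, abs_of_nonneg hP,
        abs_of_nonneg hP']
      nlinarith [abs_nonneg u]
    nlinarith [Int.one_le_abs hv]
  calc |e| ≤ |u| * |e| := le_mul_of_one_le_left (abs_nonneg e) (Int.one_le_abs hu.1)
    _ ≤ |u * e| + |v * e'| := by rw [abs_mul]; linarith [abs_nonneg (v * e')]
    _ = |u * e + v * e'| := (abs_add _ _ (by nlinarith [hu.2])).symm

variable {b N : ℤ}

lemma exists_eq_add_of_abs_det_eq {P P' e e' m c : ℤ} (hN : 0 < N)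
    (h : N ∣ P * b - e) (h' : N ∣ P' * b - e') (hdet : |P' * e - P * e'| = N)
    (hmc : N ∣ c - m * b) : ∃ u v : ℤ, m = u * P + v * P' ∧ c = u * e + v * e' := by
  set D := P' * e - P * e'
  have hD : D ≠ 0 := by rintro hD; rw [hD, abs_zero] at hdet; omega
  have hdvd : ∀ x, N ∣ x → D ∣ x := fun x hx => (abs_dvd D x).1 (hdet ▸ hx)
  obtain ⟨u, hu⟩ := hdvd (c * P' - m * e') (by
    rw [show c * P' - m * e' = (c - m * b) * P' + m * (P' * b - e') by ring]
    exact dvd_add (hmc.mul_right _) (h'.mul_left _))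
  obtain ⟨v, hv⟩ := hdvd (m * e - c * P) (by
    rw [show m * e - c * P = -((c - m * b) * P + m * (P * b - e)) by ring]
    exact (dvd_add (hmc.mul_right _) (h.mul_left _)).neg_right)
  refine ⟨u, v, mul_left_cancel₀ hD ?_, mul_left_cancel₀ hD ?_⟩
  · linear_combination P * hu + P' * hv
  · linear_combination e * hu + e' * hv

lemma abs_le_abs_of_abs_lt {P P' e e' m c : ℤ} (hN : 0 < N)
    (h : N ∣ P * b - e) (h' : N ∣ P' * b - e') (hdet : |P' * e - P * e'| = N)
    (hP : 0 ≤ P) (hP' : 0 ≤ P') (hsign : e * e' ≤ 0)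
    (hmc : N ∣ c - m * b) (hm : m ≠ 0) (hlt : |m| < P') : |e| ≤ |c| := by
  obtain ⟨u, v, rfl, rfl⟩ := exists_eq_add_of_abs_det_eq hN h h' hdet hmc
  exact abs_le_abs_add_of_abs_add_lt hP hP' hsign hm hlt

end BestApproximation

/-- `EuclidQuotients q x y`: the Euclidean algorithm on `(x, y)` has the successive quotients `q`
and stops at `(1, 0)`, so in particular `x` and `y` are coprime. -/
def EuclidQuotients : List ℤ → ℤ → ℤ → Prop
  | [], x, y => x = 1 ∧ y = 0
  | c :: q, x, y => 0 ≤ x - c * y ∧ x - c * y < y ∧ EuclidQuotients q y (x - c * y)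

/-- The pairs `(P, y)` of a continuant denominator and the current remainder met along the
Euclidean algorithm, started from denominators `P₀, P`. -/
def euclidPoints : List ℤ → ℤ → ℤ → ℤ → ℤ → List (ℤ × ℤ)
  | [], _, _, _, _ => []
  | c :: q, x, y, P, P₀ => (P, y) :: euclidPoints q y (x - c * y) (c * P + P₀) P

lemma length_euclidPoints :
    ∀ (q : List ℤ) (x y P P₀ : ℤ), (euclidPoints q x y P P₀).length = q.length
  | [], _, _, _, _ => rfl
  | c :: q, x, y, P, P₀ => by simp [euclidPoints, length_euclidPoints q]

/-- The loop invariant of the Euclidean algorithm on `(N, b)`: `(P₀, -σ x)` and `(P, σ y)` form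
a basis of `{(m, c) : N ∣ c - m b}` with second coordinates of opposite signs. `strict` makes the
next denominator exceed `P`; at the start (`P₀ = 0`) it is the hypothesis `2b ≤ N`. -/
structure EuclidInv (b N : ℤ) (q : List ℤ) (x y P P₀ σ : ℤ) : Prop where
  quotients : EuclidQuotients q x y
  abs_sign : |σ| = 1
  rem_nonneg : 0 ≤ y
  rem_lt : y < x
  prev_nonneg : 0 ≤ P₀
  prev_lt : P₀ < P
  det : P * x + P₀ * y = N
  dvd_cur : N ∣ P * b - σ * y
  dvd_prev : N ∣ P₀ * b + σ * x
  strict : 1 ≤ P₀ ∨ 2 * y ≤ x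

namespace EuclidInv

variable {b N : ℤ} {q : List ℤ} {x y P P₀ σ : ℤ}

lemma init (hq : EuclidQuotients q N b) (hb : 0 < b) (hbN : 2 * b ≤ N) :
    EuclidInv b N q N b 1 0 1 :=
  ⟨hq, abs_one, hb.le, by omega, le_rfl, one_pos, by ring, by simp, by simp, Or.inr hbN⟩

lemma pos (h : EuclidInv b N q x y P P₀ σ) : 0 < P :=
  h.prev_nonneg.trans_lt h.prev_lt

lemma le_N (h : EuclidInv b N q x y P P₀ σ) : P ≤ N := by
  nlinarith [h.det, h.pos, h.rem_nonneg, h.rem_lt, h.prev_nonneg]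

lemma N_pos (h : EuclidInv b N q x y P P₀ σ) : 0 < N :=
  h.pos.trans_le h.le_N

lemma rem_lt_N (h : EuclidInv b N q x y P P₀ σ) : y < N := by
  nlinarith [h.det, h.pos, h.rem_nonneg, h.rem_lt, h.prev_nonneg]

lemma eq_N_of_nil (h : EuclidInv b N [] x y P P₀ σ) : P = N := by
  obtain ⟨rfl, rfl⟩ := h.quotients
  simpa using h.det

lemma lt_step {c : ℤ} (h : EuclidInv b N (c :: q) x y P P₀ σ) : P < c * P + P₀ := by
  obtain ⟨h₁, h₂, -⟩ := h.quotients
  have hc : 1 ≤ c := by nlinarith [h.rem_lt]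
  rcases h.strict with hP₀ | hxy
  · nlinarith [h.pos]
  · have : 2 ≤ c := by nlinarith
    nlinarith [h.pos, h.prev_nonneg]

lemma step {c : ℤ} (h : EuclidInv b N (c :: q) x y P P₀ σ) :
    EuclidInv b N q y (x - c * y) (c * P + P₀) P (-σ) where
  quotients := h.quotients.2.2
  abs_sign := by rw [abs_neg, h.abs_sign]
  rem_nonneg := h.quotients.1
  rem_lt := h.quotients.2.1
  prev_nonneg := h.pos.le
  prev_lt := h.lt_step
  det := by linear_combination h.det
  dvd_cur := by
    rw [show (c * P + P₀) * b - -σ * (x - c * y) = c * (P * b - σ * y) + (P₀ * b + σ * x) by ring]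
    exact dvd_add (h.dvd_cur.mul_left c) h.dvd_prev
  dvd_prev := by simpa [sub_eq_add_neg] using h.dvd_cur
  strict := Or.inl h.pos

lemma lt_N {c : ℤ} (h : EuclidInv b N (c :: q) x y P P₀ σ) : P < N :=
  h.lt_step.trans_le h.step.le_N

lemma le_abs_of_abs_lt (h : EuclidInv b N q x y P P₀ σ) {m c : ℤ} (hmc : N ∣ c - m * b) (hm : m ≠ 0)
    (hlt : |m| < P) : x ≤ |c| := by
  have hσσ : σ * σ = 1 := by rw [← abs_mul_abs_self, h.abs_sign, one_mul]
  have key := abs_le_abs_of_abs_lt (e := -σ * x) (e' := σ * y) h.N_pos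
    (by simpa using h.dvd_prev) h.dvd_cur
    (by rw [show P * (-σ * x) - P₀ * (σ * y) = -σ * N by linear_combination -σ * h.det,
      abs_mul, abs_neg, h.abs_sign, one_mul, abs_of_pos h.N_pos])
    h.prev_nonneg h.pos.le
    (by nlinarith [mul_nonneg h.rem_nonneg (h.rem_nonneg.trans h.rem_lt.le)]) hmc hm hlt
  rwa [abs_mul, abs_neg, h.abs_sign, one_mul, abs_of_pos (h.rem_nonneg.trans_lt h.rem_lt)] at key

lemma forall_mem_euclidPoints (h : EuclidInv b N q x y P P₀ σ) :
    ∀ z ∈ euclidPoints q x y P P₀, P ≤ z.1 ∧ z.1 < N ∧ 0 ≤ z.2 := by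
  induction q generalizing x y P P₀ σ with
  | nil => simp [euclidPoints]
  | cons c q ih =>
    rintro z (_ | ⟨_, hz⟩)
    · exact ⟨le_rfl, h.lt_N, h.rem_nonneg⟩
    · obtain ⟨h₁, h₂, h₃⟩ := ih h.step z hz
      exact ⟨h.lt_step.le.trans h₁, h₂, h₃⟩

lemma pairwise_euclidPoints (h : EuclidInv b N q x y P P₀ σ) :
    (euclidPoints q x y P P₀).Pairwise (fun z w => z.1 < w.1) := by
  induction q generalizing x y P P₀ σ with
  | nil => simp [euclidPoints]
  | cons c q ih =>
    exact List.pairwise_cons.2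
      ⟨fun w hw => h.lt_step.trans_le (h.step.forall_mem_euclidPoints w hw).1, ih h.step⟩

lemma exists_mem_euclidPoints_le (h : EuclidInv b N q x y P P₀ σ) {m c : ℤ}
    (hmc : N ∣ c - m * b) (hPm : P ≤ |m|) (hmN : |m| < N) :
    ∃ z ∈ euclidPoints q x y P P₀, z.1 ≤ |m| ∧ z.2 ≤ |c| := by
  induction q generalizing x y P P₀ σ with
  | nil => exact absurd h.eq_N_of_nil (by omega)
  | cons c₀ q ih =>
    by_cases hlt : |m| < c₀ * P + P₀
    · have hm : m ≠ 0 := by rintro rfl; simp at hPm; linarith [h.pos]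
      exact ⟨(P, y), List.mem_cons_self .., hPm, h.step.le_abs_of_abs_lt hmc hm hlt⟩
    · obtain ⟨z, hz, hzm⟩ := ih h.step (not_lt.1 hlt)
      exact ⟨z, List.mem_cons_of_mem _ hz, hzm⟩

lemma abs_eq_of_abs_le {c₀ : ℤ} (h : EuclidInv b N (c₀ :: q) x y P P₀ σ) {m c : ℤ}
    (hmc : N ∣ c - m * b) (hm : m ≠ 0) (hmP : |m| ≤ P) (hcy : |c| ≤ y) : |m| = P ∧ |c| = y := by
  have hy : y ≤ |c| := h.step.le_abs_of_abs_lt hmc hm (hmP.trans_lt h.lt_step)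
  refine ⟨hmP.antisymm (not_lt.1 fun hlt => ?_), hcy.antisymm hy⟩
  have := h.le_abs_of_abs_lt hmc hm hlt
  linarith [h.rem_lt]

lemma intPt_mem_vrm {c₀ : ℤ} (h : EuclidInv b N (c₀ :: q) x y P P₀ σ) :
    intPt P P y ∈ vrm (absSet (Gamma 1 b N)) := by
  have hP := h.pos
  have hPN := h.lt_N
  have hyN := h.rem_lt_N
  refine intPt_mem_vrm_absSet_Gamma_one (mem_absSet_Gamma_one.2
    ⟨⟨P, P, σ * y, by simp, dvd_sub_comm.1 h.dvd_cur, by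
      rw [abs_of_pos hP, abs_mul, h.abs_sign, one_mul, abs_of_nonneg h.rem_nonneg]⟩,
      by simp [intPt_eq_zero, hP.ne']⟩) ?_
  intro m m' c hm' hc hne hmP hm'P hcy
  have hm : m ≠ 0 := by
    rintro rfl
    have hm'0 : m' = 0 := Int.eq_zero_of_abs_lt_dvd (by simpa using hm') (by omega)
    have hc0 : c = 0 := Int.eq_zero_of_abs_lt_dvd (by simpa using hc) (by omega)
    exact hne ⟨rfl, hm'0, hc0⟩
  have hm'0 : m' ≠ 0 := by
    rintro rfl
    exact hm (Int.eq_zero_of_abs_lt_dvd (by simpa using hm') (by omega))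
  have hc' : N ∣ c - m' * b := by
    rw [show c - m' * b = (c - m * b) - (m' - m) * b by ring]
    exact dvd_sub hc (hm'.mul_right b)
  obtain ⟨hPm, hyc⟩ := h.abs_eq_of_abs_le hc hm hmP hcy
  exact ⟨hPm.ge, (h.abs_eq_of_abs_le hc' hm'0 hm'P hcy).1.ge, hyc.ge⟩

lemma intPt_mem_vrm_of_mem_euclidPoints (h : EuclidInv b N q x y P P₀ σ) :
    ∀ z ∈ euclidPoints q x y P P₀, intPt z.1 z.1 z.2 ∈ vrm (absSet (Gamma 1 b N)) := by
  induction q generalizing x y P P₀ σ with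
  | nil => simp [euclidPoints]
  | cons c q ih =>
    rintro z (_ | ⟨_, hz⟩)
    · exact h.intPt_mem_vrm
    · exact ih h.step z hz

end EuclidInv

section ContinuedFraction

lemma one_lt_cfVal : ∀ {l : List ℤ}, l ≠ [] → (∀ c ∈ l, 1 ≤ c) → (∀ c ∈ l.getLast?, 2 ≤ c) →
    1 < cfVal l
  | [c], _, _, hlast => by
    have : (2 : ℚ) ≤ c := by exact_mod_cast hlast c rfl
    simp only [cfVal]
    linarith
  | c :: d :: t, _, hone, hlast => by
    have ih : 1 < cfVal (d :: t) := one_lt_cfVal (List.cons_ne_nil _ _)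
      (fun x hx => hone x (List.mem_cons_of_mem _ hx)) (by rwa [← List.getLast?_cons_cons])
    have hc : (1 : ℚ) ≤ c := by exact_mod_cast hone c (List.mem_cons_self ..)
    have : 0 < 1 / cfVal (d :: t) := by positivity
    simp only [cfVal]
    linarith

lemma euclidQuotients_of_isRegularCF :
    ∀ {l : List ℤ} {B R : ℤ}, 0 < R → Int.gcd R B = 1 → IsRegularCF ((B : ℚ) / R) l →
      EuclidQuotients l B R
  | [], _, _, _, _, hl => absurd rfl hl.1
  | [c], B, R, hR, hgcd, hl => by
    have hB : B = c * R := by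
      have hval : (c : ℚ) = B / R := hl.2.2.2.2
      field_simp at hval
      exact_mod_cast hval.symm
    have hR1 : R = 1 := by
      have := Int.gcd_eq_left (b := B) hR.le ⟨c, by rw [hB, mul_comm]⟩
      rw [hgcd] at this
      exact this.symm
    subst hR1
    simp [EuclidQuotients, hB]
  | c :: d :: t, B, R, hR, hgcd, ⟨_, _, htail, hlast, hval⟩ => by
    have hlast' : ∀ x ∈ (d :: t).getLast?, 2 ≤ x := by
      rw [← List.getLast?_cons_cons (a := c)]; exact hlast (by simp)
    have hw : 1 < cfVal (d :: t) := one_lt_cfVal (List.cons_ne_nil _ _) htail hlast'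
    have hRq : (0 : ℚ) < R := by exact_mod_cast hR
    have hrem : ((B - c * R : ℤ) : ℚ) = R / cfVal (d :: t) := by
      have hval : (c : ℚ) + 1 / cfVal (d :: t) = B / R := hval
      have : cfVal (d :: t) ≠ 0 := by positivity
      push_cast
      field_simp at hval ⊢
      linarith
    have hpos : 0 < B - c * R := by
      have : (0 : ℚ) < R / cfVal (d :: t) := by positivity
      exact_mod_cast hrem ▸ this
    have hlt : B - c * R < R := by
      have : (R : ℚ) / cfVal (d :: t) < R := div_lt_self hRq hw
      exact_mod_cast hrem ▸ this
    refine ⟨hpos.le, hlt, euclidQuotients_of_isRegularCF hpos ?_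
      ⟨List.cons_ne_nil _ _, ?_, ?_, fun _ => hlast', ?_⟩⟩
    · rw [Int.gcd_comm, Int.gcd_sub_mul_right_right, hgcd]
    · simpa using (htail d (List.mem_cons_self ..)).trans' zero_le_one
    · exact fun x hx => htail x (List.mem_cons_of_mem _ hx)
    · rw [hrem, div_div_cancel₀ hRq.ne']

lemma exists_eq_zero_cons_euclidQuotients {b N : ℤ} (hb : 0 ≤ b) (hbN : b < N)
    (hcop : Int.gcd b N = 1) {l : List ℤ} (hl : IsRegularCF ((b : ℚ) / N) l) :
    ∃ a, l = 0 :: a ∧ EuclidQuotients a N b := by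
  have hq := euclidQuotients_of_isRegularCF (by omega) (by rwa [Int.gcd_comm]) hl
  obtain _ | ⟨c, a⟩ := l
  · exact absurd rfl hl.1
  · obtain ⟨h₁, h₂, ha⟩ := hq
    obtain rfl : c = 0 := by
      rcases lt_trichotomy c 0 with hc | hc | hc
      · nlinarith
      · exact hc
      · nlinarith
    exact ⟨a, rfl, by simpa using ha⟩

end ContinuedFraction

section DistN

variable {N : ℤ}

lemma distN_le_abs {m x : ℤ} (hN : 0 < N) (h : N ∣ x - m) : distN N m ≤ |x| := by
  have emod_le : ∀ y : ℤ, 0 ≤ y → y % N ≤ y := fun y hy => by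
    rw [Int.emod_def]; nlinarith [Int.ediv_nonneg hy hN.le]
  rcases le_or_gt 0 x with hx | hx
  · calc distN N m ≤ m % N := min_le_left _ _
      _ = x % N := Int.modEq_iff_dvd.2 h
      _ ≤ |x| := (emod_le x hx).trans (le_abs_self x)
  · calc distN N m ≤ (-m) % N := min_le_right _ _
      _ = (-x) % N := Int.modEq_iff_dvd.2 (by simpa [sub_eq_add_neg, add_comm] using h.neg_right)
      _ ≤ |x| := (emod_le (-x) (by omega)).trans (neg_le_abs x)

lemma distN_pos {m : ℤ} (hN : 0 < N) (h : ¬N ∣ m) : 0 < distN N m := by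
  have h₁ : m % N ≠ 0 := fun h0 => h (Int.dvd_of_emod_eq_zero h0)
  have h₂ : (-m) % N ≠ 0 := fun h0 => h (dvd_neg.1 (Int.dvd_of_emod_eq_zero h0))
  have := Int.emod_nonneg m hN.ne'
  have := Int.emod_nonneg (-m) hN.ne'
  unfold distN
  omega

lemma distN_lt (m : ℤ) (hN : 0 < N) : distN N m < N :=
  (min_le_left _ _).trans_lt (Int.emod_lt_of_pos m hN)

lemma dvd_distN_sub_or_dvd_distN_add (m : ℤ) : N ∣ distN N m - m ∨ N ∣ distN N m + m := by
  rcases min_choice (m % N) ((-m) % N) with h | h <;> unfold distN <;> rw [h]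
  · exact Or.inl ⟨-(m / N), by rw [Int.emod_def]; ring⟩
  · exact Or.inr ⟨-(-m / N), by rw [Int.emod_def]; ring⟩

end DistN

def vrmList (N : ℤ) (pts : List (ℤ × ℤ)) : List (Fin 3 → ℝ) :=
  intPt N 0 0 :: intPt 0 N 0 :: intPt 0 0 N :: pts.map fun z => intPt z.1 z.1 z.2

lemma exists_mem_vrmList_mem_box_of_dvd {b N m m' c : ℤ} (hN : 0 < N) {pts : List (ℤ × ℤ)}
    (hm' : N ∣ m' - m) (hc : N ∣ c - m * b) (hdvd : N ∣ m) (hne : ¬(m = 0 ∧ m' = 0 ∧ c = 0)) :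
    ∃ t ∈ vrmList N pts, t ∈ box {intPt |m| |m'| |c|} := by
  have hm'N : N ∣ m' := by simpa using dvd_add hm' hdvd
  have hcN : N ∣ c := by simpa using dvd_add hc (hdvd.mul_right b)
  by_cases hm : m = 0
  · subst hm
    by_cases hm'0 : m' = 0
    · subst hm'0
      have hc0 : c ≠ 0 := fun hc0 => hne ⟨rfl, rfl, hc0⟩
      exact ⟨_, by simp [vrmList], (intPt_mem_box_singleton le_rfl le_rfl hN.le).2
        ⟨by simp, by simp, le_abs_of_dvd hcN hc0⟩⟩
    · exact ⟨_, by simp [vrmList], (intPt_mem_box_singleton le_rfl hN.le le_rfl).2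
        ⟨by simp, le_abs_of_dvd hm'N hm'0, abs_nonneg c⟩⟩
  · exact ⟨_, by simp [vrmList], (intPt_mem_box_singleton hN.le le_rfl le_rfl).2
      ⟨le_abs_of_dvd hdvd hm, abs_nonneg m', abs_nonneg c⟩⟩

namespace EuclidInv

variable {b N : ℤ} {q : List ℤ} {x y P P₀ σ : ℤ}

lemma forall_mem_vrmList (h : EuclidInv b N q x y P P₀ σ) :
    ∀ t ∈ vrmList N (euclidPoints q x y P P₀), t ∈ vrm (absSet (Gamma 1 b N)) := by
  simp only [vrmList, List.mem_cons, List.mem_map]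
  rintro t (rfl | rfl | rfl | ⟨z, hz, rfl⟩)
  exacts [intPt_N_0_0_mem_vrm h.N_pos, intPt_0_N_0_mem_vrm h.N_pos, intPt_0_0_N_mem_vrm h.N_pos,
    h.intPt_mem_vrm_of_mem_euclidPoints z hz]

lemma nodup_vrmList (h : EuclidInv b N q x y P P₀ σ) :
    (vrmList N (euclidPoints q x y P P₀)).Nodup := by
  have hN := h.N_pos
  have hmap : ((euclidPoints q x y P P₀).map fun z => intPt z.1 z.1 z.2).Nodup :=
    List.pairwise_map.2 (h.pairwise_euclidPoints.imp fun hlt heq => hlt.ne (intPt_inj.1 heq).1)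
  have hnot : ∀ X Y Z : ℤ, X = 0 ∨ X = N →
      intPt X Y Z ∉ (euclidPoints q x y P P₀).map fun z => intPt z.1 z.1 z.2 := by
    intro X Y Z hX hmem
    obtain ⟨z, hz, heq⟩ := List.mem_map.1 hmem
    have := h.forall_mem_euclidPoints z hz
    have := (intPt_inj.1 heq).1
    have := h.pos
    omega
  simp only [vrmList, List.nodup_cons, List.mem_cons, intPt_inj, not_or]
  refine ⟨⟨?_, ?_, hnot _ _ _ (Or.inr rfl)⟩, ⟨?_, hnot _ _ _ (Or.inl rfl)⟩,
    hnot _ _ _ (Or.inl rfl), hmap⟩ <;> omega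

lemma exists_mem_vrmList_mem_box_of_not_dvd (h : EuclidInv b N q x y 1 P₀ σ) {m m' c : ℤ}
    (hm' : N ∣ m' - m) (hc : N ∣ c - m * b) (hdvd : ¬N ∣ m) :
    ∃ t ∈ vrmList N (euclidPoints q x y 1 P₀), t ∈ box {intPt |m| |m'| |c|} := by
  have hN := h.N_pos
  -- both `|m|` and `|m'|` can be lowered to `|m|_N`, moving `c` to `±c`
  set μ := distN N m
  have hμ : 0 < μ := distN_pos hN hdvd
  obtain ⟨c', hc', hcc'⟩ : ∃ c', N ∣ c' - μ * b ∧ |c'| = |c| := by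
    rcases dvd_distN_sub_or_dvd_distN_add (N := N) m with hμm | hμm
    · refine ⟨c, ?_, rfl⟩
      rw [show c - μ * b = (c - m * b) - (μ - m) * b by ring]
      exact dvd_sub hc (hμm.mul_right b)
    · refine ⟨-c, ?_, abs_neg c⟩
      rw [show -c - μ * b = -(c - m * b) - (μ + m) * b by ring]
      exact dvd_sub hc.neg_right (hμm.mul_right b)
  obtain ⟨z, hz, hzμ, hzc⟩ := h.exists_mem_euclidPoints_le hc' (by rw [abs_of_pos hμ]; omega)
    (by rw [abs_of_pos hμ]; exact distN_lt m hN)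
  obtain ⟨hz₁, -, hz₂⟩ := h.forall_mem_euclidPoints z hz
  rw [abs_of_pos hμ] at hzμ
  refine ⟨_, List.mem_cons_of_mem _ <| List.mem_cons_of_mem _ <| List.mem_cons_of_mem _ <|
    List.mem_map_of_mem hz, (intPt_mem_box_singleton (by omega) (by omega) hz₂).2
      ⟨hzμ.trans (distN_le_abs hN (by simp)), hzμ.trans (distN_le_abs hN hm'), hcc' ▸ hzc⟩⟩

lemma exists_mem_vrmList_mem_box (h : EuclidInv b N q x y 1 P₀ σ) {p : Fin 3 → ℝ}
    (hp : p ∈ absSet (Gamma 1 b N)) : ∃ t ∈ vrmList N (euclidPoints q x y 1 P₀), t ∈ box {p} := by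
  obtain ⟨⟨m, m', c, hm', hc, rfl⟩, hne⟩ := mem_absSet_Gamma_one.1 hp
  by_cases hdvd : N ∣ m
  · exact exists_mem_vrmList_mem_box_of_dvd h.N_pos hm' hc hdvd
      (by simpa [intPt_eq_zero] using hne)
  · exact h.exists_mem_vrmList_mem_box_of_not_dvd hm' hc hdvd

lemma vrm_absSet_Gamma_one_eq (h : EuclidInv b N q x y 1 P₀ σ) :
    vrm (absSet (Gamma 1 b N)) = {t | t ∈ vrmList N (euclidPoints q x y 1 P₀)} :=
  vrm_eq_of_forall_exists_mem_box h.forall_mem_vrmList fun _ hp => h.exists_mem_vrmList_mem_box hp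

end EuclidInv

/-- Let `b, N` be coprime positive integers with `2b ≤ N`, and let
`b/N = [0; a₁, …, a_s]` be the regular continued fraction expansion of `b/N`.
Then `vrm(|Γ(1,b,N)|)` has exactly `s + 3` elements.  Here the expansion is
given as the list `l = [0, a₁, …, a_s]`, so `s + 3 = l.length + 2`. -/
theorem vrm_card_White
    (b N : ℤ) (hb : 1 ≤ b) (hbN : 2 * b ≤ N) (hcop : Int.gcd b N = 1)
    (l : List ℤ) (hl : IsRegularCF ((b : ℚ) / (N : ℚ)) l) :
    (vrm (absSet (Gamma 1 b N))).encard = (l.length : ℕ∞) + 2 := by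
  obtain ⟨a, rfl, ha⟩ := exists_eq_zero_cons_euclidQuotients (by omega) (by omega) hcop hl
  have h := EuclidInv.init ha hb hbN
  rw [h.vrm_absSet_Gamma_one_eq, ← List.coe_toFinset, Set.encard_coe_eq_coe_finsetCard,
    List.toFinset_card_of_nodup h.nodup_vrmList]
  simp [vrmList, length_euclidPoints]
  ring
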